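/- Let Φ=(f_1,…,f_n) be a polynomial automorphism of K^n, deg_1 a p.w.h. degree with weights w_1,…,w_n, I the ideal of relations, and deg_2 the p.w.h. degree with weights d_i = deg_1(f_i). Let i be an index such that the derivation Δ_i(P) = j(g_1,…,g_{i-1},P,g_{i+1},…,g_n) (where Φ^{-1}=(g_1,…,g_n)) satisfies deg_2(Δ_i) ≥ −w_i. Then the leading part of Δ_i with respect to deg_2 is a locally nilpotent derivation of K[x_1,…,x_n] that maps I into I. -/

import Mathlib

open MvPolynomial

/-- Leading term of a polynomial with respect to the weighted homogeneous degree
with weights `w`. -/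
noncomputable def ldt {K : Type*} [CommSemiring K] {n : ℕ} (w : Fin n → ℕ)
    (p : MvPolynomial (Fin n) K) : MvPolynomial (Fin n) K :=
  weightedHomogeneousComponent w (weightedTotalDegree w p) p

/-- The ideal of relations between the leading terms of the components of an
automorphism, with respect to the weighted degree with weights `w`. -/
noncomputable def relIdeal {K : Type*} [CommRing K] {n : ℕ} (w : Fin n → ℕ)
    (f : Fin n → MvPolynomial (Fin n) K) : Ideal (MvPolynomial (Fin n) K) :=
  RingHom.ker
    (aeval (fun i => ldt w (f i)) : MvPolynomial (Fin n) K →ₐ[K] MvPolynomial (Fin n) K)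

/-- The Jacobian determinant of an `n`-tuple of polynomials in `n` variables. -/
noncomputable def jacDet {K : Type*} [CommRing K] {n : ℕ}
    (P : Fin n → MvPolynomial (Fin n) K) : MvPolynomial (Fin n) K :=
  Matrix.det (Matrix.of fun i j => pderiv j (P i))

/-- The leading part, with respect to the weighted degree with weights `d`, of the
derivation `∑ aⱼ ∂/∂xⱼ` of degree `r`: it is `∑ bⱼ ∂/∂xⱼ` where `bⱼ` is the weighted
homogeneous component of `aⱼ` of degree `r + dⱼ` (zero if `r + dⱼ < 0`). -/
noncomputable def leadingDeriv {K : Type*} [CommRing K] {n : ℕ} (d : Fin n → ℕ) (r : ℤ)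
    (a : Fin n → MvPolynomial (Fin n) K) (P : MvPolynomial (Fin n) K) :
    MvPolynomial (Fin n) K :=
  ∑ j, (if 0 ≤ r + (d j : ℤ) then
      weightedHomogeneousComponent d (r + (d j : ℤ)).toNat (a j) else 0) * pderiv j P

/-!
Write `Δ = Δᵢ` and `c = j(g)`. The chain rule gives `j(f)(g) · j(g) = j(X) = 1`, so `c` is a
constant, and expanding the Jacobian along its `i`-th row gives `Δ(Q(g)) = c · (∂ᵢQ)(g)`: up to the
automorphism, `Δ` is `c ∂/∂xᵢ`, hence locally nilpotent.

If every coefficient `Δ(xⱼ)` has `deg₂ ≤ r + dⱼ` and `deg₂ P ≤ t`, the component of degree `t + r`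
of `Δ P` is `δ` applied to the component of degree `t` of `P`, where `δ` is the leading part.
Iterating, `δᵏ P = (Δᵏ P)_{m + k r}` for `P` homogeneous of degree `m`, so `δ` is locally nilpotent.

For `P ∈ I` homogeneous of degree `m`, the degree-`m` component of `P(f)` is `P(f̄) = 0`, so
`deg₁ P(f) < m` and `(Δ P)(f) = c · ∂ᵢ(P(f))` has degree `< m - wᵢ ≤ m + r`. Its component of degree
`m + r`, which is `(δ P)(f̄)`, therefore vanishes. Since `I` is `deg₂`-homogeneous, this suffices.
-/

theorem Matrix.det_updateRow_sum_smul {R ι m : Type*} [CommRing R] [Fintype m] [DecidableEq m]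
    (M : Matrix m m R) (i : m) (s : Finset ι) (c : ι → R) (u : ι → m → R) :
    (M.updateRow i (∑ j ∈ s, c j • u j)).det =
      ∑ j ∈ s, c j * (M.updateRow i (u j)).det := by
  let L := (Matrix.detRowAlternating (R := R) (n := m)).toMultilinearMap.toLinearMap M i
  have hL : ∀ v, L v = (M.updateRow i v).det := fun _ => rfl
  simp only [← hL, map_sum, map_smul, smul_eq_mul]

namespace MvPolynomial

open Finsupp (weight weight_apply weight_single)

section WeightedDegreeLE

variable {R σ : Type*} [CommSemiring R] {w : σ → ℤ} {s t : ℤ} {p q : MvPolynomial σ R}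

/-- Weights and bounds are integers so that derivations of negative degree fit in. -/
def WeightedDegreeLE (w : σ → ℤ) (t : ℤ) (p : MvPolynomial σ R) : Prop :=
  ∀ e ∈ p.support, weight w e ≤ t

theorem WeightedDegreeLE.mono (h : WeightedDegreeLE w s p) (hst : s ≤ t) :
    WeightedDegreeLE w t p :=
  fun e he => (h e he).trans hst

theorem weightedDegreeLE_zero : WeightedDegreeLE w t (0 : MvPolynomial σ R) := by
  simp [WeightedDegreeLE]

theorem WeightedDegreeLE.add (hp : WeightedDegreeLE w t p) (hq : WeightedDegreeLE w t q) :
    WeightedDegreeLE w t (p + q) := by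
  classical
  intro e he
  rcases Finset.mem_union.1 (support_add he) with h | h
  exacts [hp e h, hq e h]

theorem WeightedDegreeLE.sum {ι : Type*} {u : Finset ι} {p : ι → MvPolynomial σ R}
    (h : ∀ k ∈ u, WeightedDegreeLE w t (p k)) : WeightedDegreeLE w t (∑ k ∈ u, p k) :=
  Finset.sum_induction p (WeightedDegreeLE w t) (fun _ _ => .add) weightedDegreeLE_zero h

theorem WeightedDegreeLE.mul (hp : WeightedDegreeLE w s p) (hq : WeightedDegreeLE w t q) :
    WeightedDegreeLE w (s + t) (p * q) := by
  classical
  intro e he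
  obtain ⟨x, hx, y, hy, rfl⟩ := Finset.mem_add.1 (support_mul p q he)
  rw [map_add]
  exact add_le_add (hp x hx) (hq y hy)

theorem IsWeightedHomogeneous.weightedDegreeLE (h : IsWeightedHomogeneous w p t) :
    WeightedDegreeLE w t p :=
  fun _ he => (h (mem_support_iff.1 he)).le

theorem WeightedDegreeLE.weightedHomogeneousComponent_eq_zero (h : WeightedDegreeLE w s p)
    (hst : s < t) : weightedHomogeneousComponent w t p = 0 :=
  weightedHomogeneousComponent_eq_zero' t p fun e he hw => (hw ▸ h e he).not_gt hst

theorem weight_add_single_one (e : σ →₀ ℕ) (j : σ) :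
    weight w (e + Finsupp.single j 1) = weight w e + w j := by
  simp [map_add, weight_single]

theorem WeightedDegreeLE.pderiv (h : WeightedDegreeLE w t p) (j : σ) :
    WeightedDegreeLE w (t - w j) (pderiv j p) := by
  intro e he
  rw [mem_support_iff, coeff_pderiv] at he
  have := h _ (mem_support_iff.2 (left_ne_zero_of_mul he))
  rw [weight_add_single_one] at this
  linarith

theorem WeightedDegreeLE.pderiv_iterate (h : WeightedDegreeLE w t p) (j : σ) (k : ℕ) :
    WeightedDegreeLE w (t - k * w j) ((MvPolynomial.pderiv j)^[k] p) := by
  induction k with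
  | zero => simpa using h
  | succ k ih =>
    rw [Function.iterate_succ_apply']
    exact (ih.pderiv j).mono (by push_cast; linarith)

theorem weightedHomogeneousComponent_pderiv (j : σ) (t : ℤ) (p : MvPolynomial σ R) :
    weightedHomogeneousComponent w t (pderiv j p) =
      pderiv j (weightedHomogeneousComponent w (t + w j) p) := by
  classical
  ext e
  simp only [coeff_weightedHomogeneousComponent, coeff_pderiv, weight_add_single_one,
    add_left_inj]
  split_ifs <;> simp

end WeightedDegreeLE

section Components

variable {R σ : Type*} [CommRing R] {w : σ → ℤ} {s t : ℤ} {p q : MvPolynomial σ R}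

theorem WeightedDegreeLE.sub_weightedHomogeneousComponent (h : WeightedDegreeLE w t p) :
    WeightedDegreeLE w (t - 1) (p - weightedHomogeneousComponent w t p) := by
  classical
  intro e he
  rw [mem_support_iff, coeff_sub, coeff_weightedHomogeneousComponent] at he
  split_ifs at he with hwe
  · simp at he
  · have := h e (mem_support_iff.2 (by simpa using he))
    omega

theorem WeightedDegreeLE.le_sub_one_of_weightedHomogeneousComponent_eq_zero
    (h : WeightedDegreeLE w t p) (h0 : weightedHomogeneousComponent w t p = 0) :
    WeightedDegreeLE w (t - 1) p := by
  simpa [h0] using h.sub_weightedHomogeneousComponent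

theorem weightedHomogeneousComponent_mul_of_le (hp : WeightedDegreeLE w s p)
    (hq : WeightedDegreeLE w t q) :
    weightedHomogeneousComponent w (s + t) (p * q) =
      weightedHomogeneousComponent w s p * weightedHomogeneousComponent w t q := by
  set p₀ := weightedHomogeneousComponent w s p
  set q₀ := weightedHomogeneousComponent w t q
  have hp₀ : IsWeightedHomogeneous w p₀ s :=
    weightedHomogeneousComponent_isWeightedHomogeneous s p
  have hq₀ : IsWeightedHomogeneous w q₀ t :=
    weightedHomogeneousComponent_isWeightedHomogeneous t q
  have hrest : WeightedDegreeLE w (s + t - 1) (p₀ * (q - q₀) + (p - p₀) * q) :=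
    (hp₀.weightedDegreeLE.mul hq.sub_weightedHomogeneousComponent).mono (by omega) |>.add
      ((hp.sub_weightedHomogeneousComponent.mul hq).mono (by omega))
  have hsplit : p * q = p₀ * q₀ + (p₀ * (q - q₀) + (p - p₀) * q) := by ring
  rw [hsplit, map_add, (hp₀.mul hq₀).weightedHomogeneousComponent_same,
    hrest.weightedHomogeneousComponent_eq_zero (by omega), add_zero]

end Components

section NatWeights

variable {R σ : Type*} [CommSemiring R] {d : σ → ℕ} {t : ℤ} {p : MvPolynomial σ R}

theorem weight_natCast (d : σ → ℕ) (e : σ →₀ ℕ) :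
    weight (fun j => (d j : ℤ)) e = weight d e := by
  simp [weight_apply, Finsupp.sum]

theorem weightedDegreeLE_weightedTotalDegree (d : σ → ℕ) (p : MvPolynomial σ R) :
    WeightedDegreeLE (fun j => (d j : ℤ)) (weightedTotalDegree d p : ℕ) p := fun e he => by
  rw [weight_natCast]
  exact_mod_cast le_weightedTotalDegree d he

theorem WeightedDegreeLE.eq_zero_of_neg (h : WeightedDegreeLE (fun j => (d j : ℤ)) t p)
    (ht : t < 0) : p = 0 := by
  by_contra hp
  obtain ⟨e, he⟩ := support_nonempty.2 hp
  have := h e he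
  rw [weight_natCast] at this
  omega

theorem weightedHomogeneousComponent_natCast (d : σ → ℕ) (t : ℤ) (p : MvPolynomial σ R) :
    weightedHomogeneousComponent (fun j => (d j : ℤ)) t p =
      if 0 ≤ t then weightedHomogeneousComponent d t.toNat p else 0 := by
  classical
  ext e
  simp only [coeff_weightedHomogeneousComponent, weight_natCast]
  by_cases ht : 0 ≤ t
  · lift t to ℕ using ht
    simp [coeff_weightedHomogeneousComponent]
  · simp [ht, show ∀ m : ℕ, (m : ℤ) ≠ t from fun m => by omega]

theorem exists_pderiv_iterate_eq_zero (j : σ) (p : MvPolynomial σ R) :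
    ∃ k, (pderiv j)^[k] p = 0 := by
  have h := (weightedDegreeLE_weightedTotalDegree (fun _ => 1) p).pderiv_iterate j
    (weightedTotalDegree (fun _ => 1) p + 1)
  exact ⟨_, h.eq_zero_of_neg (by push_cast; omega)⟩

end NatWeights

section Aeval

variable {R σ τ : Type*} [CommRing R] {v : τ → ℤ} {w : σ → ℤ}
  {F : τ → MvPolynomial σ R} {t : ℤ} {P : MvPolynomial τ R}

theorem WeightedDegreeLE.of_mul_X {p : MvPolynomial τ R} {n : τ}
    (h : WeightedDegreeLE v t (p * X n)) : WeightedDegreeLE v (t - v n) p := by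
  intro e he
  have := h (e + Finsupp.single n 1) (by simpa using he)
  rw [weight_add_single_one] at this
  linarith

theorem weightedDegreeLE_aeval_monomial_and_component
    (hF : ∀ j, WeightedDegreeLE w (v j) (F j)) (e : τ →₀ ℕ) (c : R) (t : ℤ)
    (hec : WeightedDegreeLE v t (monomial e c)) :
    WeightedDegreeLE w t (aeval F (monomial e c)) ∧
      weightedHomogeneousComponent w t (aeval F (monomial e c)) =
        aeval (fun j => weightedHomogeneousComponent w (v j) (F j))
          (weightedHomogeneousComponent v t (monomial e c)) := by
  classical
  revert t hec
  refine induction_on_monomial (motive := fun p => ∀ t, WeightedDegreeLE v t p →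
    WeightedDegreeLE w t (aeval F p) ∧ weightedHomogeneousComponent w t (aeval F p) =
      aeval (fun j => weightedHomogeneousComponent w (v j) (F j))
        (weightedHomogeneousComponent v t p)) (fun a t ha => ?_) (fun p n ih t hpX => ?_) e c
  · have hw : IsWeightedHomogeneous w (C a : MvPolynomial σ R) 0 := isWeightedHomogeneous_C w a
    have hv : IsWeightedHomogeneous v (C a : MvPolynomial τ R) 0 := isWeightedHomogeneous_C v a
    rw [aeval_C, algebraMap_eq, weightedHomogeneousComponent_of_mem hw,
      weightedHomogeneousComponent_of_mem hv]
    refine ⟨?_, by split_ifs <;> simp⟩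
    rcases eq_or_ne a 0 with rfl | ha0
    · simpa using weightedDegreeLE_zero
    · exact hw.weightedDegreeLE.mono (by simpa using ha 0 (by simpa using ha0))
  · have hp := hpX.of_mul_X
    obtain ⟨ih₁, ih₂⟩ := ih (t - v n) hp
    have hX : IsWeightedHomogeneous v (X n : MvPolynomial τ R) (v n) :=
      isWeightedHomogeneous_X R v n
    have hFp := weightedHomogeneousComponent_mul_of_le ih₁ (hF n)
    have hXp := weightedHomogeneousComponent_mul_of_le hp hX.weightedDegreeLE
    rw [sub_add_cancel] at hFp hXp
    rw [map_mul, aeval_X, hFp, hXp, ih₂, hX.weightedHomogeneousComponent_same, map_mul, aeval_X]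
    exact ⟨by simpa using ih₁.mul (hF n), rfl⟩

theorem weightedDegreeLE_monomial_of_mem_support (hP : WeightedDegreeLE v t P) {e : τ →₀ ℕ}
    (he : e ∈ P.support) : WeightedDegreeLE v t (monomial e (coeff e P)) :=
  (isWeightedHomogeneous_monomial v e _ rfl).weightedDegreeLE.mono (hP e he)

theorem WeightedDegreeLE.aeval (hF : ∀ j, WeightedDegreeLE w (v j) (F j))
    (hP : WeightedDegreeLE v t P) : WeightedDegreeLE w t (aeval F P) := by
  rw [P.as_sum, map_sum]
  exact WeightedDegreeLE.sum fun e he => (weightedDegreeLE_aeval_monomial_and_component hF e _ t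
    (weightedDegreeLE_monomial_of_mem_support hP he)).1

theorem weightedHomogeneousComponent_aeval_of_le (hF : ∀ j, WeightedDegreeLE w (v j) (F j))
    (hP : WeightedDegreeLE v t P) :
    weightedHomogeneousComponent w t (aeval F P) =
      aeval (fun j => weightedHomogeneousComponent w (v j) (F j))
        (weightedHomogeneousComponent v t P) := by
  rw [P.as_sum, map_sum, map_sum, map_sum, map_sum]
  exact Finset.sum_congr rfl fun e he => (weightedDegreeLE_aeval_monomial_and_component hF e _ t
    (weightedDegreeLE_monomial_of_mem_support hP he)).2

theorem IsWeightedHomogeneous.aeval (hF : ∀ j, IsWeightedHomogeneous w (F j) (v j))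
    (hP : IsWeightedHomogeneous v P t) : IsWeightedHomogeneous w (aeval F P) t := by
  have h := weightedHomogeneousComponent_aeval_of_le (fun j => (hF j).weightedDegreeLE)
    hP.weightedDegreeLE
  simp only [(hF _).weightedHomogeneousComponent_same, hP.weightedHomogeneousComponent_same] at h
  exact h ▸ weightedHomogeneousComponent_isWeightedHomogeneous t _

theorem weightedHomogeneousComponent_aeval (hF : ∀ j, IsWeightedHomogeneous w (F j) (v j))
    (t : ℤ) (P : MvPolynomial τ R) :
    weightedHomogeneousComponent w t (aeval F P) =
      aeval F (weightedHomogeneousComponent v t P) := by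
  classical
  induction P using MvPolynomial.induction_on' with
  | monomial e c =>
    have hm := isWeightedHomogeneous_monomial v e c rfl
    rw [weightedHomogeneousComponent_of_mem (hm.aeval hF), weightedHomogeneousComponent_of_mem hm]
    split_ifs <;> simp
  | add p q hp hq => simp only [map_add, hp, hq]

end Aeval

theorem pderiv_aeval {R σ τ : Type*} [CommSemiring R] [Fintype τ] (F : τ → MvPolynomial σ R)
    (P : MvPolynomial τ R) (j : σ) :
    pderiv j (aeval F P) = ∑ k, aeval F (pderiv k P) * pderiv j (F k) := by
  classical
  induction P using MvPolynomial.induction_on with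
  | C a => simp
  | add p q hp hq => simp only [map_add, hp, hq, add_mul, Finset.sum_add_distrib]
  | mul_X p k hp =>
    simp only [map_mul, aeval_X, Derivation.leibniz, smul_eq_mul, hp, map_add, pderiv_X,
      Pi.single_apply, add_mul, Finset.sum_add_distrib, Finset.mul_sum]
    simp [mul_comm, mul_left_comm]

theorem aeval_aeval_of_aeval_eq_X {R σ : Type*} [CommSemiring R] {f g : σ → MvPolynomial σ R}
    (h : ∀ i, aeval f (g i) = X i) (P : MvPolynomial σ R) : aeval f (aeval g P) = P := by
  rw [← AlgHom.comp_apply, comp_aeval, show (fun i => aeval f (g i)) = X from _root_.funext h,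
    aeval_X_left_apply]

section VectorField

variable {R σ : Type*} [Fintype σ]

noncomputable def vectorField [CommSemiring R] (a : σ → MvPolynomial σ R) :
    Module.End R (MvPolynomial σ R) :=
  ∑ j, a j • (pderiv j).toLinearMap

theorem vectorField_apply [CommSemiring R] (a : σ → MvPolynomial σ R) (P : MvPolynomial σ R) :
    vectorField a P = ∑ j, a j * pderiv j P := by
  simp [vectorField]

noncomputable def leadingPart [CommSemiring R] (w : σ → ℤ) (r : ℤ)
    (a : σ → MvPolynomial σ R) :
    Module.End R (MvPolynomial σ R) :=
  vectorField fun j => weightedHomogeneousComponent w (r + w j) (a j)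

variable [CommRing R] {w : σ → ℤ} {r t : ℤ} {a : σ → MvPolynomial σ R}
  {P : MvPolynomial σ R}

theorem WeightedDegreeLE.vectorField (ha : ∀ j, WeightedDegreeLE w (r + w j) (a j))
    (hP : WeightedDegreeLE w t P) : WeightedDegreeLE w (t + r) (vectorField a P) := by
  rw [vectorField_apply]
  exact WeightedDegreeLE.sum fun j _ => ((ha j).mul (hP.pderiv j)).mono (by omega)

theorem weightedHomogeneousComponent_vectorField (ha : ∀ j, WeightedDegreeLE w (r + w j) (a j))
    (hP : WeightedDegreeLE w t P) :
    weightedHomogeneousComponent w (t + r) (vectorField a P) =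
      leadingPart w r a (weightedHomogeneousComponent w t P) := by
  rw [leadingPart, vectorField_apply, vectorField_apply, map_sum]
  refine Finset.sum_congr rfl fun j _ => ?_
  have h := weightedHomogeneousComponent_mul_of_le (ha j) (hP.pderiv j)
  rw [show r + w j + (t - w j) = t + r by ring] at h
  rw [h, weightedHomogeneousComponent_pderiv, sub_add_cancel]

theorem weightedHomogeneousComponent_vectorField_pow
    (ha : ∀ j, WeightedDegreeLE w (r + w j) (a j)) (hP : WeightedDegreeLE w t P) (k : ℕ) :
    weightedHomogeneousComponent w (t + k * r) ((vectorField a ^ k) P) =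
      (leadingPart w r a ^ k) (weightedHomogeneousComponent w t P) := by
  induction k generalizing t P with
  | zero => simp
  | succ k ih =>
    rw [pow_succ, pow_succ, Module.End.mul_apply, Module.End.mul_apply,
      show t + (k + 1 : ℕ) * r = t + r + k * r by push_cast; ring, ih (hP.vectorField ha),
      weightedHomogeneousComponent_vectorField ha hP]

theorem exists_leadingPart_pow_eq_zero (ha : ∀ j, WeightedDegreeLE w (r + w j) (a j))
    (hnil : ∀ Q, ∃ k, (vectorField a ^ k) Q = 0) (P : MvPolynomial σ R) :
    ∃ k, (leadingPart w r a ^ k) P = 0 := by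
  have hmem : ∀ Q, Q ∈ (leadingPart w r a).maxGenEigenspace 0 ↔
      ∃ k, (leadingPart w r a ^ k) Q = 0 := by
    simp
  rw [← hmem]
  induction P using induction_on' with
  | monomial e c =>
    have hm := isWeightedHomogeneous_monomial w e c rfl
    obtain ⟨k, hk⟩ := hnil (monomial e c)
    have h := weightedHomogeneousComponent_vectorField_pow ha hm.weightedDegreeLE k
    rw [hk, map_zero, hm.weightedHomogeneousComponent_same] at h
    exact (hmem _).2 ⟨k, h.symm⟩
  | add p q hp hq => exact add_mem hp hq

end VectorField

section Relations

variable {R σ : Type*} [CommRing R] [Fintype σ] {v w : σ → ℤ} {r : ℤ} {i : σ} {c : R}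
  {a F : σ → MvPolynomial σ R}

theorem aeval_leadingPart_eq_zero_of_isWeightedHomogeneous
    (hF : ∀ j, WeightedDegreeLE w (v j) (F j)) (ha : ∀ j, WeightedDegreeLE v (r + v j) (a j))
    (hconj : ∀ Q, aeval F (vectorField a Q) = C c * pderiv i (aeval F Q)) (hr : -w i ≤ r)
    {m : ℤ} {Q : MvPolynomial σ R} (hQ : IsWeightedHomogeneous v Q m)
    (hQ0 : aeval (fun j => weightedHomogeneousComponent w (v j) (F j)) Q = 0) :
    aeval (fun j => weightedHomogeneousComponent w (v j) (F j)) (leadingPart v r a Q) = 0 := by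
  have hFQ : WeightedDegreeLE w (m - 1) (aeval F Q) :=
    (hQ.weightedDegreeLE.aeval hF).le_sub_one_of_weightedHomogeneousComponent_eq_zero (by
      rw [weightedHomogeneousComponent_aeval_of_le hF hQ.weightedDegreeLE,
        hQ.weightedHomogeneousComponent_same, hQ0])
  rw [← hQ.weightedHomogeneousComponent_same, ← weightedHomogeneousComponent_vectorField ha
    hQ.weightedDegreeLE, ← weightedHomogeneousComponent_aeval_of_le hF
    (hQ.weightedDegreeLE.vectorField ha), hconj]
  exact ((isWeightedHomogeneous_C w c).weightedDegreeLE.mul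
    (hFQ.pderiv i)).weightedHomogeneousComponent_eq_zero (by omega)

theorem aeval_leadingPart_eq_zero
    (hF : ∀ j, WeightedDegreeLE w (v j) (F j)) (ha : ∀ j, WeightedDegreeLE v (r + v j) (a j))
    (hconj : ∀ Q, aeval F (vectorField a Q) = C c * pderiv i (aeval F Q)) (hr : -w i ≤ r)
    {P : MvPolynomial σ R}
    (hP : aeval (fun j => weightedHomogeneousComponent w (v j) (F j)) P = 0) :
    aeval (fun j => weightedHomogeneousComponent w (v j) (F j)) (leadingPart v r a P) = 0 := by
  have hsum := sum_weightedHomogeneousComponent v P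
  rw [finsum_eq_sum _ (weightedHomogeneousComponent_finsupp P)] at hsum
  rw [← hsum, map_sum, map_sum]
  refine Finset.sum_eq_zero fun m _ => aeval_leadingPart_eq_zero_of_isWeightedHomogeneous hF ha
    hconj hr (weightedHomogeneousComponent_isWeightedHomogeneous m P) ?_
  rw [← weightedHomogeneousComponent_aeval
    (fun j => weightedHomogeneousComponent_isWeightedHomogeneous _ _), hP, map_zero]

end Relations

end MvPolynomial

section Jacobian

variable {R : Type*} [CommRing R] {n : ℕ}

noncomputable def jacobianMatrix (P : Fin n → MvPolynomial (Fin n) R) :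
    Matrix (Fin n) (Fin n) (MvPolynomial (Fin n) R) :=
  Matrix.of fun i j => pderiv j (P i)

theorem jacDet_eq_det_jacobianMatrix (P : Fin n → MvPolynomial (Fin n) R) :
    jacDet P = (jacobianMatrix P).det :=
  rfl

theorem jacobianMatrix_comp (f g : Fin n → MvPolynomial (Fin n) R) :
    jacobianMatrix (fun k => aeval g (f k)) =
      (jacobianMatrix f).map (aeval g) * jacobianMatrix g := by
  ext a b
  simp only [jacobianMatrix, Matrix.mul_apply, Matrix.of_apply, Matrix.map_apply, pderiv_aeval]

theorem jacDet_comp (f g : Fin n → MvPolynomial (Fin n) R) :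
    jacDet (fun k => aeval g (f k)) = aeval g (jacDet f) * jacDet g := by
  simp only [jacDet_eq_det_jacobianMatrix, jacobianMatrix_comp, Matrix.det_mul, AlgHom.map_det,
    AlgHom.mapMatrix_apply]

theorem jacDet_X : jacDet (X : Fin n → MvPolynomial (Fin n) R) = 1 := by
  have h : jacobianMatrix (X : Fin n → MvPolynomial (Fin n) R) = 1 := by
    ext a b
    simp [jacobianMatrix, pderiv_X, Matrix.one_apply, Pi.single_apply]
  rw [jacDet_eq_det_jacobianMatrix, h, Matrix.det_one]

theorem jacobianMatrix_update (g : Fin n → MvPolynomial (Fin n) R) (i : Fin n)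
    (P : MvPolynomial (Fin n) R) :
    jacobianMatrix (Function.update g i P) =
      (jacobianMatrix g).updateRow i fun j => pderiv j P := by
  ext a b
  by_cases h : a = i
  · subst h; simp [jacobianMatrix]
  · simp [jacobianMatrix, Matrix.updateRow_apply, h]

/-- `Δᵢ`, written as `∑ⱼ Δᵢ(xⱼ) ∂/∂xⱼ`; see `jacobianDerivation_apply`. -/
noncomputable def jacobianDerivation (g : Fin n → MvPolynomial (Fin n) R) (i : Fin n) :
    Module.End R (MvPolynomial (Fin n) R) :=
  vectorField fun j => jacDet (Function.update g i (X j))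

theorem jacobianDerivation_apply (g : Fin n → MvPolynomial (Fin n) R) (i : Fin n)
    (P : MvPolynomial (Fin n) R) :
    jacobianDerivation g i P = jacDet (Function.update g i P) := by
  have hrow : (fun b => pderiv b P) =
      ∑ j, pderiv j P • fun b => pderiv b (X j : MvPolynomial (Fin n) R) := by
    ext b
    simp [pderiv_X, Pi.single_apply]
  simp only [jacobianDerivation, vectorField_apply, jacDet_eq_det_jacobianMatrix,
    jacobianMatrix_update]
  rw [hrow, Matrix.det_updateRow_sum_smul]
  simp only [mul_comm]

theorem jacDet_update_aeval (g : Fin n → MvPolynomial (Fin n) R) (i : Fin n)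
    (Q : MvPolynomial (Fin n) R) :
    jacDet (Function.update g i (aeval g Q)) = jacDet g * aeval g (pderiv i Q) := by
  have hrow : (fun b => pderiv b (aeval g Q)) =
      ∑ k, aeval g (pderiv k Q) • jacobianMatrix g k := by
    ext b
    simp only [pderiv_aeval, jacobianMatrix, Finset.sum_apply, Pi.smul_apply, Matrix.of_apply,
      smul_eq_mul]
  rw [jacDet_eq_det_jacobianMatrix, jacobianMatrix_update, hrow, Matrix.det_updateRow_sum,
    smul_eq_mul, mul_comm, jacDet_eq_det_jacobianMatrix]

end Jacobian

section Automorphism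

variable {R : Type*} [CommRing R] {n : ℕ} {f g : Fin n → MvPolynomial (Fin n) R}

theorem jacDet_eq_C_of_aeval_eq_X [IsReduced R] (hgf : ∀ i, aeval g (f i) = X i) :
    ∃ c : R, jacDet g = C c := by
  have h : aeval g (jacDet f) * jacDet g = 1 := by
    rw [← jacDet_comp, _root_.funext hgf, jacDet_X]
  obtain ⟨c, -, hc⟩ := isUnit_iff_eq_C_of_isReduced.1 (IsUnit.of_mul_eq_one_right _ h)
  exact ⟨c, hc⟩

theorem jacobianDerivation_aeval {c : R} (hc : jacDet g = C c) (i : Fin n)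
    (Q : MvPolynomial (Fin n) R) :
    jacobianDerivation g i (aeval g Q) = C c * aeval g (pderiv i Q) := by
  rw [jacobianDerivation_apply, jacDet_update_aeval, hc]

theorem jacobianDerivation_pow_aeval {c : R} (hc : jacDet g = C c) (i : Fin n) (k : ℕ)
    (Q : MvPolynomial (Fin n) R) :
    (jacobianDerivation g i ^ k) (aeval g Q) = C (c ^ k) * aeval g ((pderiv i)^[k] Q) := by
  induction k generalizing Q with
  | zero => simp
  | succ k ih =>
    rw [pow_succ, Module.End.mul_apply, jacobianDerivation_aeval hc, C_mul', map_smul, ih,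
      Function.iterate_succ_apply, smul_eq_C_mul, ← mul_assoc, ← C_mul, pow_succ']

theorem exists_jacobianDerivation_pow_eq_zero (hgf : ∀ i, aeval g (f i) = X i) {c : R}
    (hc : jacDet g = C c) (i : Fin n) (P : MvPolynomial (Fin n) R) :
    ∃ k, (jacobianDerivation g i ^ k) P = 0 := by
  obtain ⟨k, hk⟩ := exists_pderiv_iterate_eq_zero i (aeval f P)
  refine ⟨k, ?_⟩
  rw [← aeval_aeval_of_aeval_eq_X hgf P, jacobianDerivation_pow_aeval hc, hk, map_zero, mul_zero]

theorem aeval_jacobianDerivation (hfg : ∀ i, aeval f (g i) = X i)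
    (hgf : ∀ i, aeval g (f i) = X i) {c : R} (hc : jacDet g = C c) (i : Fin n)
    (Q : MvPolynomial (Fin n) R) :
    aeval f (jacobianDerivation g i Q) = C c * pderiv i (aeval f Q) := by
  conv_lhs => rw [← aeval_aeval_of_aeval_eq_X hgf Q]
  rw [jacobianDerivation_aeval hc, map_mul, aeval_C, algebraMap_eq,
    aeval_aeval_of_aeval_eq_X hfg]

end Automorphism

theorem leadingDeriv_eq_leadingPart {R : Type*} [CommRing R] {n : ℕ} (d : Fin n → ℕ) (r : ℤ)
    (a : Fin n → MvPolynomial (Fin n) R) :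
    leadingDeriv d r a = leadingPart (fun j => (d j : ℤ)) r a := by
  ext P
  simp [leadingDeriv, leadingPart, vectorField_apply, weightedHomogeneousComponent_natCast]

theorem ldt_eq_weightedHomogeneousComponent {R : Type*} [CommRing R] {n : ℕ}
    (w : Fin n → ℕ) (p : MvPolynomial (Fin n) R) :
    ldt w p =
      weightedHomogeneousComponent (fun j => (w j : ℤ)) (weightedTotalDegree w p : ℕ) p := by
  simp [ldt, weightedHomogeneousComponent_natCast]

theorem stmt13_general {K : Type*} [Field K]
    {n : ℕ} (w : Fin n → ℕ)
    (f g : Fin n → MvPolynomial (Fin n) K)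
    (hfg : ∀ i, aeval f (g i) = X i) (hgf : ∀ i, aeval g (f i) = X i)
    (d : Fin n → ℕ) (hd : ∀ i, d i = weightedTotalDegree w (f i))
    (i : Fin n) (r : ℤ)
    (hub : ∀ j, jacDet (Function.update g i (X j)) = 0 ∨
      ((weightedTotalDegree d (jacDet (Function.update g i (X j))) : ℕ) : ℤ) ≤ r + d j)
    (hr : -(w i : ℤ) ≤ r) :
    (∀ P : MvPolynomial (Fin n) K,
      ∃ k : ℕ, (leadingDeriv d r (fun j => jacDet (Function.update g i (X j))))^[k] P = 0) ∧
    (∀ P ∈ relIdeal w f,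
      leadingDeriv d r (fun j => jacDet (Function.update g i (X j))) P ∈ relIdeal w f) := by
  obtain ⟨c, hc⟩ := jacDet_eq_C_of_aeval_eq_X hgf
  have ha : ∀ j, WeightedDegreeLE (fun j => (d j : ℤ)) (r + d j)
      (jacDet (Function.update g i (X j))) := fun j => by
    rcases hub j with h | h
    · exact h ▸ weightedDegreeLE_zero
    · exact (weightedDegreeLE_weightedTotalDegree d _).mono h
  have hF : ∀ j, WeightedDegreeLE (fun j => (w j : ℤ)) (d j) (f j) := fun j =>
    hd j ▸ weightedDegreeLE_weightedTotalDegree w (f j)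
  simp only [relIdeal, RingHom.mem_ker, ldt_eq_weightedHomogeneousComponent, ← hd,
    leadingDeriv_eq_leadingPart, ← Module.End.pow_apply]
  exact ⟨exists_leadingPart_pow_eq_zero ha (exists_jacobianDerivation_pow_eq_zero hgf hc i),
    fun P => aeval_leadingPart_eq_zero hF ha (aeval_jacobianDerivation hfg hgf hc i) hr⟩

/-- Lemma: if `i` is an index with `deg₂(Δᵢ) = r ≥ -wᵢ`, then the leading part of `Δᵢ`
with respect to `deg₂` is locally nilpotent and maps the ideal of relations into
itself.  Here `Δᵢ(P) = j(g₁,…,g_{i-1},P,g_{i+1},…,gₙ)` and `r = deg₂(Δᵢ)` is expressed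
via the values of `Δᵢ` on the variables. -/
theorem stmt13 {K : Type*} [Field K] [IsAlgClosed K] [CharZero K]
    {n : ℕ} (hn : 0 < n) (w : Fin n → ℕ) (hw : ∀ i, 0 < w i)
    (f g : Fin n → MvPolynomial (Fin n) K)
    (hf : Function.Bijective
      ⇑(aeval f : MvPolynomial (Fin n) K →ₐ[K] MvPolynomial (Fin n) K))
    (hfg : ∀ i, aeval f (g i) = X i) (hgf : ∀ i, aeval g (f i) = X i)
    (d : Fin n → ℕ) (hd : ∀ i, d i = weightedTotalDegree w (f i))
    (i : Fin n) (r : ℤ)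
    (hub : ∀ j, jacDet (Function.update g i (X j)) = 0 ∨
      ((weightedTotalDegree d (jacDet (Function.update g i (X j))) : ℕ) : ℤ) ≤ r + d j)
    (hmax : ∃ j, jacDet (Function.update g i (X j)) ≠ 0 ∧
      ((weightedTotalDegree d (jacDet (Function.update g i (X j))) : ℕ) : ℤ) = r + d j)
    (hr : -(w i : ℤ) ≤ r) :
    (∀ P : MvPolynomial (Fin n) K,
      ∃ k : ℕ, (leadingDeriv d r (fun j => jacDet (Function.update g i (X j))))^[k] P = 0) ∧
    (∀ P ∈ relIdeal w f,
      leadingDeriv d r (fun j => jacDet (Function.update g i (X j))) P ∈ relIdeal w f) :=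
  stmt13_general w f g hfg hgf d hd i r hub hr
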